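/- arXiv:2206.02946 — 6 statements merged into one kernel-verified Lean document; each statement's English description precedes it below -/
import Mathlib

section
/- Let E be a real inner product space and let G : E → ℝ be a differentiable function whose gradient ∇G is Lipschitz continuous with constant L > 0. Fix W ∈ E and a step size η with 0 < η ≤ 1/(2L), and set W' = W − η·∇G(W). Then ‖W' − W‖ ≤ 2·√(η·(G(W) − G(W'))). (In particular G(W) ≥ G(W'), so the square root is well defined.) -/
open Set RealInnerProductSpace

/-- Quadratic upper bound (descent lemma) for a function with `L`-Lipschitz gradient. -/
lemma descent_lemma_aux
    {E : Type*} [NormedAddCommGroup E] [InnerProductSpace ℝ E] [CompleteSpace E]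
    (G : E → ℝ) (hG : Differentiable ℝ G)
    (L : ℝ) (hL : 0 < L)
    (hLip : LipschitzWith L.toNNReal (fun x => gradient G x))
    (W v : E) :
    G (W + v) ≤ G W + ⟪gradient G W, v⟫ + L / 2 * ‖v‖ ^ 2 := by
  set h : ℝ → ℝ := fun t => G (W + t • v) - t * ⟪gradient G W, v⟫ - L / 2 * t ^ 2 * ‖v‖ ^ 2
    with hh
  have key : ∀ t : ℝ, HasDerivAt h
      (⟪gradient G (W + t • v), v⟫ - ⟪gradient G W, v⟫ - L * t * ‖v‖ ^ 2) t := by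
    intro t
    have h1 : HasDerivAt (fun t : ℝ => W + t • v) v t := by
      simpa using ((hasDerivAt_id t).smul_const v).const_add W
    have h2 : HasDerivAt (fun t : ℝ => G (W + t • v))
        (fderiv ℝ G (W + t • v) v) t :=
      (hG (W + t • v)).hasFDerivAt.comp_hasDerivAt t h1
    have h3 : fderiv ℝ G (W + t • v) v = ⟪gradient G (W + t • v), v⟫ := by
      have := ((hG (W + t • v)).hasGradientAt).hasFDerivAt
      rw [this.fderiv]
      simp [InnerProductSpace.toDual]
    rw [h3] at h2
    have h4 : HasDerivAt (fun t : ℝ => t * ⟪gradient G W, v⟫) (⟪gradient G W, v⟫) t := by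
      simpa using (hasDerivAt_id t).mul_const (⟪gradient G W, v⟫)
    have h5 : HasDerivAt (fun t : ℝ => L / 2 * t ^ 2 * ‖v‖ ^ 2) (L * t * ‖v‖ ^ 2) t := by
      have := ((hasDerivAt_pow 2 t).const_mul (L / 2)).mul_const (‖v‖ ^ 2)
      exact this.congr_deriv (by ring)
    exact (h2.sub h4).sub h5
  have hderiv_nonpos : ∀ t ∈ Ioo (0 : ℝ) 1, deriv h t ≤ 0 := by
    intro t ht
    rw [(key t).deriv]
    have hb : ⟪gradient G (W + t • v), v⟫ - ⟪gradient G W, v⟫ ≤ L * t * ‖v‖ ^ 2 := by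
      have h1 : ⟪gradient G (W + t • v) - gradient G W, v⟫
          ≤ ‖gradient G (W + t • v) - gradient G W‖ * ‖v‖ := real_inner_le_norm _ _
      have h2 : ‖gradient G (W + t • v) - gradient G W‖ ≤ L * ‖t • v‖ := by
        have := hLip.dist_le_mul (W + t • v) W
        simpa [dist_eq_norm, Real.coe_toNNReal _ hL.le, add_sub_cancel_left] using this
      have h3 : ‖t • v‖ = t * ‖v‖ := by
        rw [norm_smul, Real.norm_eq_abs, abs_of_pos ht.1]
      calc ⟪gradient G (W + t • v), v⟫ - ⟪gradient G W, v⟫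
          = ⟪gradient G (W + t • v) - gradient G W, v⟫ := by rw [inner_sub_left]
        _ ≤ ‖gradient G (W + t • v) - gradient G W‖ * ‖v‖ := h1
        _ ≤ L * ‖t • v‖ * ‖v‖ := by
            apply mul_le_mul_of_nonneg_right h2 (norm_nonneg _)
        _ = L * t * ‖v‖ ^ 2 := by rw [h3]; ring
    linarith
  have hcont : ContinuousOn h (Icc (0 : ℝ) 1) := by
    apply Continuous.continuousOn
    have c1 : Continuous fun t : ℝ => G (W + t • v) :=
      hG.continuous.comp (continuous_const.add (continuous_id.smul continuous_const))
    have c2 : Continuous fun t : ℝ => t * ⟪gradient G W, v⟫ :=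
      continuous_id.mul continuous_const
    have c3 : Continuous fun t : ℝ => L / 2 * t ^ 2 * ‖v‖ ^ 2 :=
      (continuous_const.mul (continuous_pow 2)).mul continuous_const
    exact (c1.sub c2).sub c3
  have hanti : AntitoneOn h (Icc (0 : ℝ) 1) := by
    apply antitoneOn_of_deriv_nonpos (convex_Icc 0 1) hcont
    · intro t ht
      rw [interior_Icc] at ht
      exact (key t).differentiableAt.differentiableWithinAt
    · intro t ht
      rw [interior_Icc] at ht
      exact hderiv_nonpos t ht
  have h10 : h 1 ≤ h 0 := hanti (by norm_num) (by norm_num) (by norm_num)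
  simp only [hh, one_smul, zero_smul, add_zero, one_mul, one_pow, zero_pow, mul_zero,
    zero_mul, sub_zero, mul_one] at h10
  linarith

/-- "Improve or Localize": the parameter change of one gradient-descent step is controlled
by the step size and the loss decrease. -/
theorem improve_or_localize
    {E : Type*} [NormedAddCommGroup E] [InnerProductSpace ℝ E] [CompleteSpace E]
    (G : E → ℝ) (hG : Differentiable ℝ G)
    (L : ℝ) (hL : 0 < L)
    (hLip : LipschitzWith L.toNNReal (fun x => gradient G x))
    (W : E) (η : ℝ) (hη : 0 < η) (hη' : η ≤ 1 / (2 * L)) :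
    ‖(W - η • gradient G W) - W‖ ≤
      2 * Real.sqrt (η * (G W - G (W - η • gradient G W))) := by
  set g := gradient G W with hg
  have hdesc := descent_lemma_aux G hG L hL hLip W (-(η • g))
  have hWv : W + -(η • g) = W - η • g := by abel
  rw [hWv] at hdesc
  have hip : ⟪g, -(η • g)⟫ = -(η * ‖g‖ ^ 2) := by
    rw [inner_neg_right, real_inner_smul_right, real_inner_self_eq_norm_sq]
    try ring
  have hnv : ‖-(η • g)‖ ^ 2 = η ^ 2 * ‖g‖ ^ 2 := by
    rw [norm_neg, norm_smul, Real.norm_eq_abs, abs_of_pos hη, mul_pow]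
  rw [hip, hnv] at hdesc
  -- key descent bound
  have hLη : L * η ≤ 1 / 2 := by
    rw [le_div_iff₀ (by linarith : (0:ℝ) < 2 * L)] at hη'
    linarith
  have hD : η / 4 * ‖g‖ ^ 2 ≤ G W - G (W - η • g) := by nlinarith [sq_nonneg ‖g‖]
  have hnorm : ‖(W - η • g) - W‖ = η * ‖g‖ := by
    have : (W - η • g) - W = -(η • g) := by abel
    rw [this, norm_neg, norm_smul, Real.norm_eq_abs, abs_of_pos hη]
  rw [hnorm]
  have h2 : η * ‖g‖ / 2 ≤ Real.sqrt (η * (G W - G (W - η • g))) := by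
    apply Real.le_sqrt_of_sq_le
    nlinarith [mul_le_mul_of_nonneg_left hD hη.le]
  linarith
end

section
/- Let ι be a finite index set and p : ι → ℝ a family of strictly positive reals. Let M > 0 and C₀ > 0 be real numbers, and suppose that for every τ > 0 the number of indices i with p(i) > τ is at most C₀/τ^M. Then for every real k > M, the k-th power sum satisfies Σ_{i ∈ ι} p(i)^k ≤ C₀^{k/M} · Σ_{n=1}^{∞} n^{−k/M} (the series on the right converges since k/M > 1). -/
open Filter Topology

/-- Bounded persistence moments: if a finite family of positive reals satisfies the
polynomial counting bound `#{i | p i > τ} ≤ C₀ / τ^M` for all `τ > 0`, then for every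
`k > M` the `k`-th power sum is bounded by `C₀^{k/M} · Σ_{n≥1} n^{-k/M}`. -/
theorem bounded_persistence_moments
    {ι : Type*} [Fintype ι] (p : ι → ℝ) (hp : ∀ i, 0 < p i)
    (M C₀ : ℝ) (hM : 0 < M) (hC₀ : 0 < C₀)
    (hcount : ∀ τ : ℝ, 0 < τ → (({i | τ < p i} : Set ι).ncard : ℝ) ≤ C₀ / τ ^ M)
    (k : ℝ) (hk : M < k) :
    ∑ i, p i ^ k ≤ C₀ ^ (k / M) * ∑' n : ℕ+, (n : ℝ) ^ (-(k / M)) := by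
  classical
  set s := k / M with hs
  have hs1 : 1 < s := (one_lt_div hM).2 hk
  have hs0 : 0 < s := lt_trans one_pos hs1
  have hMs : M * s = k := by rw [hs]; field_simp [hM.ne']
  -- summability over ℕ+
  have hsum : Summable (fun n : ℕ+ => (n : ℝ) ^ (-s)) := by
    rw [← Equiv.pnatEquivNat.symm.summable_iff]
    have h1 : Summable (fun n : ℕ => ((n : ℝ)) ^ (-s)) :=
      Real.summable_nat_rpow.2 (by linarith)
    have h2 : Summable (fun n : ℕ => (((n + 1 : ℕ) : ℝ)) ^ (-s)) := by
      have := (summable_nat_add_iff (f := fun n : ℕ => ((n : ℝ)) ^ (-s)) 1).2 h1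
      simpa using this
    refine h2.congr fun n => ?_
    simp [Equiv.pnatEquivNat, Nat.succPNat]
  set N := Fintype.card ι with hN
  let e := Fintype.equivFin ι
  set σ := Tuple.sort (fun m : Fin N => -p (e.symm m)) with hσ
  set q : Fin N → ℝ := fun m => p (e.symm (σ m)) with hq
  have hqpos : ∀ m, 0 < q m := fun m => hp _
  have hqanti : Antitone q := by
    intro l m hlm
    have := Tuple.monotone_sort (fun m : Fin N => -p (e.symm m)) hlm
    simpa [hq, neg_le_neg_iff] using this
  -- pointwise bound
  have key : ∀ m : Fin N, q m ^ k ≤ C₀ ^ s * (((m : ℕ) : ℝ) + 1) ^ (-s) := by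
    intro m
    have hm1 : (0 : ℝ) < ((m : ℕ) : ℝ) + 1 := by positivity
    have hcard : ∀ τ : ℝ, 0 < τ → τ < q m → (((m : ℕ) : ℝ) + 1) ≤ C₀ / τ ^ M := by
      intro τ hτ hτq
      set A : Finset ι := (Finset.Iic m).image (fun l => e.symm (σ l)) with hA
      have hinj : Function.Injective (fun l : Fin N => e.symm (σ l)) :=
        e.symm.injective.comp σ.injective
      have hAcard : A.card = (m : ℕ) + 1 := by
        rw [hA, Finset.card_image_of_injective _ hinj, Fin.card_Iic]
      have hAsub : (A : Set ι) ⊆ {i | τ < p i} := by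
        intro j hj
        simp only [hA, Finset.coe_image, Set.mem_image] at hj
        obtain ⟨l, hl, rfl⟩ := hj
        have hlm : l ≤ m := by simpa using hl
        exact lt_of_lt_of_le hτq (hqanti hlm)
      have hfin : ({i | τ < p i} : Set ι).Finite := Set.toFinite _
      have hle : (A.card : ℝ) ≤ (({i | τ < p i} : Set ι).ncard : ℝ) := by
        have h' : A.card ≤ ({i | τ < p i} : Set ι).ncard := by
          rw [← Set.ncard_coe_finset A]
          exact Set.ncard_le_ncard hAsub hfin
        exact_mod_cast h'
      calc (((m : ℕ) : ℝ) + 1) = (A.card : ℝ) := by rw [hAcard]; push_cast; ring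
        _ ≤ _ := le_trans hle (hcount τ hτ)
    have hτM : ∀ τ : ℝ, 0 < τ → τ < q m → τ ^ M ≤ C₀ / (((m : ℕ) : ℝ) + 1) := by
      intro τ hτ hτq
      have h := hcard τ hτ hτq
      have hτM0 : (0 : ℝ) < τ ^ M := Real.rpow_pos_of_pos hτ M
      rw [le_div_iff₀ hτM0] at h
      rw [le_div_iff₀ hm1]
      linarith [h]
    have hlim : Tendsto (fun τ : ℝ => τ ^ M) (nhdsWithin (q m) (Set.Iio (q m)))
        (nhds (q m ^ M)) :=
      ((Real.continuousAt_rpow_const (q m) M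
        (Or.inl (ne_of_gt (hqpos m))))).continuousWithinAt
    have hqM : q m ^ M ≤ C₀ / (((m : ℕ) : ℝ) + 1) := by
      refine le_of_tendsto hlim ?_
      filter_upwards [self_mem_nhdsWithin,
        Ioo_mem_nhdsLT_of_mem ⟨half_lt_self (hqpos m), le_refl (q m)⟩] with τ h1 h2
      exact hτM τ (lt_trans (half_pos (hqpos m)) h2.1) h1
    have hqk : q m ^ k = (q m ^ M) ^ s := by
      rw [← hMs, Real.rpow_mul (hqpos m).le]
    calc q m ^ k = (q m ^ M) ^ s := hqk
      _ ≤ (C₀ / (((m : ℕ) : ℝ) + 1)) ^ s :=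
          Real.rpow_le_rpow (Real.rpow_pos_of_pos (hqpos m) M).le hqM hs0.le
      _ = C₀ ^ s * (((m : ℕ) : ℝ) + 1) ^ (-s) := by
          rw [Real.div_rpow hC₀.le hm1.le, Real.rpow_neg hm1.le, div_eq_mul_inv]
  -- sum everything up
  have hsum_eq : ∑ i, p i ^ k = ∑ m : Fin N, q m ^ k :=
    (Equiv.sum_comp (σ.trans e.symm) (fun i => p i ^ k)).symm
  have hstep : ∑ m : Fin N, q m ^ k ≤ C₀ ^ s * ∑ m : Fin N, (((m : ℕ) : ℝ) + 1) ^ (-s) := by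
    rw [Finset.mul_sum]
    exact Finset.sum_le_sum fun m _ => key m
  have htail : ∑ m : Fin N, (((m : ℕ) : ℝ) + 1) ^ (-s) ≤ ∑' n : ℕ+, (n : ℝ) ^ (-s) := by
    have hginj : Function.Injective (fun m : Fin N => ((m : ℕ)).succPNat) :=
      Nat.succPNat_injective.comp Fin.val_injective
    have himg : ∑ m : Fin N, (((m : ℕ) : ℝ) + 1) ^ (-s)
        = ∑ n ∈ Finset.univ.image (fun m : Fin N => ((m : ℕ)).succPNat), (n : ℝ) ^ (-s) := by
      rw [Finset.sum_image (fun a _ b _ h => hginj h)]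
      refine Finset.sum_congr rfl fun m _ => ?_
      simp [Nat.succPNat]
    rw [himg]
    refine hsum.sum_le_tsum _ (fun n _ => ?_)
    positivity
  calc ∑ i, p i ^ k = ∑ m : Fin N, q m ^ k := hsum_eq
    _ ≤ C₀ ^ s * ∑ m : Fin N, (((m : ℕ) : ℝ) + 1) ^ (-s) := hstep
    _ ≤ C₀ ^ s * ∑' n : ℕ+, (n : ℝ) ^ (-s) := by
        exact mul_le_mul_of_nonneg_left htail (Real.rpow_nonneg hC₀.le s)
end

section
/- Let ι be a finite index set, k ≥ 1 a natural number, δ ≥ 0 a real, and p, q : ι → ℝ families of nonnegative reals such that |p(i) − q(i)| ≤ δ for every i ∈ ι. Then |Σ_{i ∈ ι} p(i)^k − Σ_{i ∈ ι} q(i)^k| ≤ k·δ·(Σ_{i ∈ ι} p(i)^{k−1} + Σ_{i ∈ ι} q(i)^{k−1}). -/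
open Finset

section LinearOrderedCommRing

variable {α : Type*} [CommRing α] [LinearOrder α] [IsOrderedRing α] {a b : α}

theorem max_pow_le_pow_add_pow (ha : 0 ≤ a) (hb : 0 ≤ b) (m : ℕ) :
    max a b ^ m ≤ a ^ m + b ^ m := by
  rcases le_total a b with h | h
  · rw [max_eq_right h]
    exact le_add_of_nonneg_left (pow_nonneg ha m)
  · rw [max_eq_left h]
    exact le_add_of_nonneg_right (pow_nonneg hb m)

theorem abs_pow_sub_pow_le_of_nonneg (ha : 0 ≤ a) (hb : 0 ≤ b) (n : ℕ) :
    |a ^ n - b ^ n| ≤ |a - b| * n * (a ^ (n - 1) + b ^ (n - 1)) :=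
  calc |a ^ n - b ^ n| ≤ |a - b| * n * max |a| |b| ^ (n - 1) := abs_pow_sub_pow_le ..
    _ = |a - b| * n * max a b ^ (n - 1) := by rw [abs_of_nonneg ha, abs_of_nonneg hb]
    _ ≤ |a - b| * n * (a ^ (n - 1) + b ^ (n - 1)) := by
      gcongr
      exact max_pow_le_pow_add_pow ha hb _

end LinearOrderedCommRing

theorem power_sum_diff_bound_general
    {ι : Type*} [Fintype ι] (k : ℕ)
    (δ : ℝ)
    (p q : ι → ℝ) (hp : ∀ i, 0 ≤ p i) (hq : ∀ i, 0 ≤ q i)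
    (hpq : ∀ i, |p i - q i| ≤ δ) :
    |∑ i, p i ^ k - ∑ i, q i ^ k| ≤
      (k : ℝ) * δ * ((∑ i, p i ^ (k - 1)) + ∑ i, q i ^ (k - 1)) := by
  have pointwise (i : ι) :
      |p i ^ k - q i ^ k| ≤ (k : ℝ) * δ * (p i ^ (k - 1) + q i ^ (k - 1)) :=
    calc |p i ^ k - q i ^ k| ≤ |p i - q i| * k * (p i ^ (k - 1) + q i ^ (k - 1)) :=
          abs_pow_sub_pow_le_of_nonneg (hp i) (hq i) k
      _ ≤ δ * k * (p i ^ (k - 1) + q i ^ (k - 1)) := by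
          gcongr
          · exact add_nonneg (pow_nonneg (hp i) _) (pow_nonneg (hq i) _)
          · exact hpq i
      _ = (k : ℝ) * δ * (p i ^ (k - 1) + q i ^ (k - 1)) := by ring
  calc |∑ i, p i ^ k - ∑ i, q i ^ k| = |∑ i, (p i ^ k - q i ^ k)| := by rw [sum_sub_distrib]
    _ ≤ ∑ i, |p i ^ k - q i ^ k| := abs_sum_le_sum_abs _ _
    _ ≤ ∑ i, (k : ℝ) * δ * (p i ^ (k - 1) + q i ^ (k - 1)) := sum_le_sum fun i _ => pointwise i
    _ = (k : ℝ) * δ * ((∑ i, p i ^ (k - 1)) + ∑ i, q i ^ (k - 1)) := by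
        rw [← mul_sum, sum_add_distrib]

/-- Key estimate of the Lipschitz constant of persistence moments: if two finite
families of nonnegative reals differ pointwise by at most `δ`, then their `k`-th
power sums differ by at most `k·δ·(Σ p^{k-1} + Σ q^{k-1})`. -/
theorem power_sum_diff_bound
    {ι : Type*} [Fintype ι] (k : ℕ) (hk : 1 ≤ k)
    (δ : ℝ) (hδ : 0 ≤ δ)
    (p q : ι → ℝ) (hp : ∀ i, 0 ≤ p i) (hq : ∀ i, 0 ≤ q i)
    (hpq : ∀ i, |p i - q i| ≤ δ) :
    |∑ i, p i ^ k - ∑ i, q i ^ k| ≤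
      (k : ℝ) * δ * ((∑ i, p i ^ (k - 1)) + ∑ i, q i ^ (k - 1)) :=
  power_sum_diff_bound_general k δ p q hp hq hpq
end

section
/- Let A, S, T be finite sets of points in ℝ × ℝ, all of whose points have both coordinates in the interval [−1, 1]. Let δ ≥ 0, let γ : S → T be a bijection such that for every s ∈ S both |s₁ − γ(s)₁| ≤ δ and |s₂ − γ(s)₂| ≤ δ, and let σ : A → S be an injection. Then the injection γ ∘ σ : A → T satisfies Σ_{a ∈ A} ((a₁ − (γ∘σ)(a)₁)² + (a₂ − (γ∘σ)(a)₂)²) ≤ Σ_{a ∈ A} ((a₁ − σ(a)₁)² + (a₂ − σ(a)₂)²) + |A|·(8δ + 2δ²). -/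
/-! The bound holds term by term. Coordinatewise, `a - γ(σ a) = (a - σ a) - (γ(σ a) - σ a)`
with `|a - σ a| ≤ 2` (both points lie in `[-1, 1]`) and `|γ(σ a) - σ a| ≤ δ`, so expanding the
square raises each of the two squared coordinate gaps by at most `2·2·δ + δ²`. -/

open Finset

lemma sq_sub_le_sq_add {x e M δ : ℝ} (hx : |x| ≤ M) (he : |e| ≤ δ) :
    (x - e) ^ 2 ≤ x ^ 2 + 2 * M * δ + δ ^ 2 := by
  have hxe : -(x * e) ≤ M * δ :=
    calc -(x * e) ≤ |x| * |e| := by rw [← abs_mul]; exact neg_le_abs _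
      _ ≤ M * δ := mul_le_mul hx he (abs_nonneg e) ((abs_nonneg x).trans hx)
  have he2 : e ^ 2 ≤ δ ^ 2 := by
    rw [← sq_abs]; exact pow_le_pow_left₀ (abs_nonneg e) he 2
  nlinarith

lemma abs_sub_le_of_mem_Icc {x y a b : ℝ} (hx : x ∈ Set.Icc a b) (hy : y ∈ Set.Icc a b) :
    |x - y| ≤ b - a := by
  rw [← Real.dist_eq]; exact Real.dist_le_of_mem_Icc hx hy

def sqDist (p q : ℝ × ℝ) : ℝ := (p.1 - q.1) ^ 2 + (p.2 - q.2) ^ 2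

lemma sqDist_le_sqDist_add {p q r : ℝ × ℝ} {M δ : ℝ}
    (hpq : |p.1 - q.1| ≤ M ∧ |p.2 - q.2| ≤ M) (hqr : |q.1 - r.1| ≤ δ ∧ |q.2 - r.2| ≤ δ) :
    sqDist p r ≤ sqDist p q + (4 * M * δ + 2 * δ ^ 2) := by
  have h₁ := sq_sub_le_sq_add (e := r.1 - q.1) (δ := δ) hpq.1 (by rw [abs_sub_comm]; exact hqr.1)
  have h₂ := sq_sub_le_sq_add (e := r.2 - q.2) (δ := δ) hpq.2 (by rw [abs_sub_comm]; exact hqr.2)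
  rw [sub_sub_sub_cancel_right] at h₁ h₂
  unfold sqDist
  linarith

lemma Finset.sum_le_sum_add_card_mul {ι : Type*} (s : Finset ι) {f g : ι → ℝ} {c : ℝ}
    (h : ∀ i ∈ s, f i ≤ g i + c) : ∑ i ∈ s, f i ≤ ∑ i ∈ s, g i + #s * c := by
  calc ∑ i ∈ s, f i ≤ ∑ i ∈ s, (g i + c) := sum_le_sum h
    _ = ∑ i ∈ s, g i + #s * c := by rw [sum_add_distrib, sum_const, nsmul_eq_mul]

theorem matching_cost_composition_bound_general
    (A S : Finset (ℝ × ℝ))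
    (hA : ∀ a ∈ A, a.1 ∈ Set.Icc (-1 : ℝ) 1 ∧ a.2 ∈ Set.Icc (-1 : ℝ) 1)
    (hS : ∀ s ∈ S, s.1 ∈ Set.Icc (-1 : ℝ) 1 ∧ s.2 ∈ Set.Icc (-1 : ℝ) 1)
    (δ : ℝ)
    (γ : ℝ × ℝ → ℝ × ℝ)
    (hγδ : ∀ s ∈ S, |s.1 - (γ s).1| ≤ δ ∧ |s.2 - (γ s).2| ≤ δ)
    (σ : ℝ × ℝ → ℝ × ℝ) (hσ : Set.MapsTo σ ↑A ↑S) :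
    ∑ a ∈ A, ((a.1 - (γ (σ a)).1) ^ 2 + (a.2 - (γ (σ a)).2) ^ 2) ≤
      (∑ a ∈ A, ((a.1 - (σ a).1) ^ 2 + (a.2 - (σ a).2) ^ 2)) +
        (A.card : ℝ) * (8 * δ + 2 * δ ^ 2) := by
  refine A.sum_le_sum_add_card_mul fun a ha => ?_
  have hs : σ a ∈ S := hσ ha
  have hclose : |a.1 - (σ a).1| ≤ 2 ∧ |a.2 - (σ a).2| ≤ 2 := by
    constructor
    · linarith [abs_sub_le_of_mem_Icc (hA a ha).1 (hS _ hs).1]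
    · linarith [abs_sub_le_of_mem_Icc (hA a ha).2 (hS _ hs).2]
  have h := sqDist_le_sqDist_add hclose (hγδ _ hs)
  unfold sqDist at h
  linarith

/-- Combinatorial core of the bounded increase of the topological term: composing an
injection `σ : A → S` with a `δ`-perturbation bijection `γ : S → T` increases the
matching cost by at most `|A|·(8δ + 2δ²)`, when all points lie in `[-1,1]²`. -/
theorem matching_cost_composition_bound
    (A S T : Finset (ℝ × ℝ))
    (hA : ∀ a ∈ A, a.1 ∈ Set.Icc (-1 : ℝ) 1 ∧ a.2 ∈ Set.Icc (-1 : ℝ) 1)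
    (hS : ∀ s ∈ S, s.1 ∈ Set.Icc (-1 : ℝ) 1 ∧ s.2 ∈ Set.Icc (-1 : ℝ) 1)
    (hT : ∀ t ∈ T, t.1 ∈ Set.Icc (-1 : ℝ) 1 ∧ t.2 ∈ Set.Icc (-1 : ℝ) 1)
    (δ : ℝ) (hδ : 0 ≤ δ)
    (γ : ℝ × ℝ → ℝ × ℝ) (hγ : Set.BijOn γ ↑S ↑T)
    (hγδ : ∀ s ∈ S, |s.1 - (γ s).1| ≤ δ ∧ |s.2 - (γ s).2| ≤ δ)
    (σ : ℝ × ℝ → ℝ × ℝ) (hσ : Set.MapsTo σ ↑A ↑S) (hσi : Set.InjOn σ ↑A) :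
    ∑ a ∈ A, ((a.1 - (γ (σ a)).1) ^ 2 + (a.2 - (γ (σ a)).2) ^ 2) ≤
      (∑ a ∈ A, ((a.1 - (σ a).1) ^ 2 + (a.2 - (σ a).2) ^ 2)) +
        (A.card : ℝ) * (8 * δ + 2 * δ ^ 2) :=
  matching_cost_composition_bound_general A S hA hS δ γ hγδ σ hσ
end

section
/- Let A, S, T be finite sets of points in ℝ × ℝ, all of whose points have both coordinates in the interval [−1, 1], with |A| ≤ |S|. Let δ ≥ 0 and let γ : S → T be a bijection such that for every s ∈ S both |s₁ − γ(s)₁| ≤ δ and |s₂ − γ(s)₂| ≤ δ. Then min over injections τ : A → T of Σ_{a ∈ A} ((a₁ − τ(a)₁)² + (a₂ − τ(a)₂)²) is at most (min over injections σ : A → S of Σ_{a ∈ A} ((a₁ − σ(a)₁)² + (a₂ − σ(a)₂)²)) + |A|·(8δ + 2δ²), and symmetrically the minimum over injections into S is at most the minimum over injections into T plus |A|·(8δ + 2δ²). -/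
/-! For `a` matched to `s`, replacing `s` by `t` with `|sᵢ - tᵢ| ≤ δ` changes `(aᵢ - sᵢ)²` by
`(sᵢ - tᵢ)(2(aᵢ - sᵢ) + (sᵢ - tᵢ))`, at most `δ(4 + δ)` in absolute value because
`|aᵢ - sᵢ| ≤ 2` in `[-1, 1]`. So composing a matching into `S` with `γ`, or a matching into `T`
with `γ⁻¹`, changes its cost by at most `|A|(8δ + 2δ²)`, which compares the infima both ways. -/

/-- The matching cost of an injection `σ` from `A`. -/
noncomputable def matchingCost (A : Finset (ℝ × ℝ)) (σ : ℝ × ℝ → ℝ × ℝ) : ℝ :=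
  ∑ a ∈ A, ((a.1 - (σ a).1) ^ 2 + (a.2 - (σ a).2) ^ 2)

/-- The set of matching costs over all injections from `A` into `S`. -/
def matchingCosts (A S : Finset (ℝ × ℝ)) : Set ℝ :=
  {c | ∃ σ : ℝ × ℝ → ℝ × ℝ, Set.MapsTo σ ↑A ↑S ∧ Set.InjOn σ ↑A ∧ c = matchingCost A σ}

lemma csInf_le_csInf_add {α : Type*} [ConditionallyCompleteLattice α] [AddCommGroup α]
    [IsOrderedAddMonoid α] {X Y : Set α} {ε : α} (hX : X.Nonempty) (hY : BddBelow Y)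
    (h : ∀ x ∈ X, ∃ y ∈ Y, y ≤ x + ε) : sInf Y ≤ sInf X + ε := by
  rw [← sub_le_iff_le_add]
  refine le_csInf hX fun x hx => ?_
  obtain ⟨y, hy, hyx⟩ := h x hx
  exact sub_le_iff_le_add.mpr ((csInf_le hY hy).trans hyx)

lemma abs_sq_sub_sq_sub_le {a s t r δ : ℝ} (hr : |a - s| ≤ r) (hδ : |s - t| ≤ δ) :
    |(a - t) ^ 2 - (a - s) ^ 2| ≤ δ * (2 * r + δ) := by
  have hfactor : (a - t) ^ 2 - (a - s) ^ 2 = (s - t) * (2 * (a - s) + (s - t)) := by ring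
  have hsecond : |2 * (a - s) + (s - t)| ≤ 2 * r + δ := by
    calc |2 * (a - s) + (s - t)| ≤ |2 * (a - s)| + |s - t| := abs_add_le _ _
      _ = 2 * |a - s| + |s - t| := by rw [abs_mul, abs_two]
      _ ≤ 2 * r + δ := by linarith
  rw [hfactor, abs_mul]
  exact mul_le_mul hδ hsecond (abs_nonneg _) ((abs_nonneg _).trans hδ)

lemma abs_matchingCost_sub_le (A : Finset (ℝ × ℝ)) (σ τ : ℝ × ℝ → ℝ × ℝ) {r δ : ℝ}
    (hr : ∀ a ∈ A, |a.1 - (σ a).1| ≤ r ∧ |a.2 - (σ a).2| ≤ r)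
    (hδ : ∀ a ∈ A, |(σ a).1 - (τ a).1| ≤ δ ∧ |(σ a).2 - (τ a).2| ≤ δ) :
    |matchingCost A τ - matchingCost A σ| ≤ A.card * (2 * (δ * (2 * r + δ))) := by
  rw [matchingCost, matchingCost, ← Finset.sum_sub_distrib]
  refine (Finset.abs_sum_le_sum_abs _ _).trans ?_
  rw [← nsmul_eq_mul, ← Finset.sum_const]
  refine Finset.sum_le_sum fun a ha => ?_
  have h₁ := abs_sq_sub_sq_sub_le (hr a ha).1 (hδ a ha).1
  have h₂ := abs_sq_sub_sq_sub_le (hr a ha).2 (hδ a ha).2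
  calc _ = |((a.1 - (τ a).1) ^ 2 - (a.1 - (σ a).1) ^ 2)
            + ((a.2 - (τ a).2) ^ 2 - (a.2 - (σ a).2) ^ 2)| := by ring_nf
    _ ≤ _ := (abs_add_le _ _).trans (by linarith)

lemma abs_sub_le_two_of_mem_Icc {x y : ℝ} (hx : x ∈ Set.Icc (-1 : ℝ) 1)
    (hy : y ∈ Set.Icc (-1 : ℝ) 1) : |x - y| ≤ 2 := by
  rw [abs_le]
  constructor <;> linarith [hx.1, hx.2, hy.1, hy.2]

lemma abs_matchingCost_comp_sub_le (A S : Finset (ℝ × ℝ))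
    (hA : ∀ a ∈ A, a.1 ∈ Set.Icc (-1 : ℝ) 1 ∧ a.2 ∈ Set.Icc (-1 : ℝ) 1)
    (hS : ∀ s ∈ S, s.1 ∈ Set.Icc (-1 : ℝ) 1 ∧ s.2 ∈ Set.Icc (-1 : ℝ) 1)
    {δ : ℝ} (γ : ℝ × ℝ → ℝ × ℝ) (hγδ : ∀ s ∈ S, |s.1 - (γ s).1| ≤ δ ∧ |s.2 - (γ s).2| ≤ δ)
    (σ : ℝ × ℝ → ℝ × ℝ) (hσ : Set.MapsTo σ ↑A ↑S) :
    |matchingCost A (γ ∘ σ) - matchingCost A σ| ≤ A.card * (8 * δ + 2 * δ ^ 2) := by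
  have hbound := abs_matchingCost_sub_le A σ (γ ∘ σ) (r := 2)
    (fun a ha => ⟨abs_sub_le_two_of_mem_Icc (hA a ha).1 (hS _ (hσ ha)).1,
      abs_sub_le_two_of_mem_Icc (hA a ha).2 (hS _ (hσ ha)).2⟩)
    (fun a ha => hγδ _ (hσ ha))
  convert hbound using 2
  ring

lemma matchingCost_congr (A : Finset (ℝ × ℝ)) {σ τ : ℝ × ℝ → ℝ × ℝ} (h : Set.EqOn σ τ ↑A) :
    matchingCost A σ = matchingCost A τ :=
  Finset.sum_congr rfl fun a ha => by rw [h ha]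

lemma matchingCosts_bddBelow (A S : Finset (ℝ × ℝ)) : BddBelow (matchingCosts A S) := by
  refine ⟨0, fun c hc => ?_⟩
  obtain ⟨σ, -, -, rfl⟩ := hc
  exact Finset.sum_nonneg fun a _ => by positivity

lemma matchingCosts_nonempty {A S : Finset (ℝ × ℝ)} (h : A.card ≤ S.card) :
    (matchingCosts A S).Nonempty := by
  have hle : (↑A : Set (ℝ × ℝ)).encard ≤ (↑S : Set (ℝ × ℝ)).encard := by
    rw [Set.encard_coe_eq_coe_finsetCard, Set.encard_coe_eq_coe_finsetCard]
    exact_mod_cast h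
  obtain ⟨σ, hσS, hσinj⟩ := A.finite_toSet.exists_injOn_of_encard_le hle
  exact ⟨matchingCost A σ, σ, hσS, hσinj, rfl⟩

theorem optimal_matching_cost_stability_general
    (A S T : Finset (ℝ × ℝ))
    (hA : ∀ a ∈ A, a.1 ∈ Set.Icc (-1 : ℝ) 1 ∧ a.2 ∈ Set.Icc (-1 : ℝ) 1)
    (hS : ∀ s ∈ S, s.1 ∈ Set.Icc (-1 : ℝ) 1 ∧ s.2 ∈ Set.Icc (-1 : ℝ) 1)
    (hcard : A.card ≤ S.card)
    (δ : ℝ)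
    (γ : ℝ × ℝ → ℝ × ℝ) (hγ : Set.BijOn γ ↑S ↑T)
    (hγδ : ∀ s ∈ S, |s.1 - (γ s).1| ≤ δ ∧ |s.2 - (γ s).2| ≤ δ) :
    sInf (matchingCosts A T) ≤
        sInf (matchingCosts A S) + (A.card : ℝ) * (8 * δ + 2 * δ ^ 2) ∧
      sInf (matchingCosts A S) ≤
        sInf (matchingCosts A T) + (A.card : ℝ) * (8 * δ + 2 * δ ^ 2) := by
  have hcost := abs_matchingCost_comp_sub_le A S hA hS γ hγδ
  have hcardT : A.card ≤ T.card := Finset.card_nbij γ hγ.mapsTo hγ.injOn hγ.surjOn ▸ hcard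
  constructor
  · refine csInf_le_csInf_add (matchingCosts_nonempty hcard) (matchingCosts_bddBelow A T) ?_
    rintro _ ⟨σ, hσS, hσinj, rfl⟩
    exact ⟨_, ⟨γ ∘ σ, hγ.mapsTo.comp hσS, hγ.injOn.comp hσinj hσS, rfl⟩,
      by linarith [(abs_le.mp (hcost σ hσS)).2]⟩
  · refine csInf_le_csInf_add (matchingCosts_nonempty hcardT) (matchingCosts_bddBelow A S) ?_
    rintro _ ⟨τ, hτT, hτinj, rfl⟩
    have hγ' : Set.BijOn (Function.invFunOn γ ↑S) ↑T ↑S :=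
      hγ.invOn_invFunOn.symm.bijOn hγ.surjOn.mapsTo_invFunOn hγ.mapsTo
    set σ := Function.invFunOn γ ↑S ∘ τ
    have hσS : Set.MapsTo σ ↑A ↑S := hγ'.mapsTo.comp hτT
    have hγσ : matchingCost A (γ ∘ σ) = matchingCost A τ :=
      matchingCost_congr A fun a ha => hγ.invOn_invFunOn.2 (hτT ha)
    exact ⟨_, ⟨σ, hσS, hγ'.injOn.comp hτinj hτT, rfl⟩,
      by linarith [(abs_le.mp (hcost σ hσS)).1]⟩

/-- Bounded increase of the topological term: if `γ : S → T` is a bijection moving each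
coordinate by at most `δ` and all points lie in `[-1,1]²`, then the optimal matching cost
from `A` into `T` exceeds the optimal matching cost from `A` into `S` by at most
`|A|·(8δ + 2δ²)`, and symmetrically. -/
theorem optimal_matching_cost_stability
    (A S T : Finset (ℝ × ℝ))
    (hA : ∀ a ∈ A, a.1 ∈ Set.Icc (-1 : ℝ) 1 ∧ a.2 ∈ Set.Icc (-1 : ℝ) 1)
    (hS : ∀ s ∈ S, s.1 ∈ Set.Icc (-1 : ℝ) 1 ∧ s.2 ∈ Set.Icc (-1 : ℝ) 1)
    (hT : ∀ t ∈ T, t.1 ∈ Set.Icc (-1 : ℝ) 1 ∧ t.2 ∈ Set.Icc (-1 : ℝ) 1)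
    (hcard : A.card ≤ S.card)
    (δ : ℝ) (hδ : 0 ≤ δ)
    (γ : ℝ × ℝ → ℝ × ℝ) (hγ : Set.BijOn γ ↑S ↑T)
    (hγδ : ∀ s ∈ S, |s.1 - (γ s).1| ≤ δ ∧ |s.2 - (γ s).2| ≤ δ) :
    sInf (matchingCosts A T) ≤
        sInf (matchingCosts A S) + (A.card : ℝ) * (8 * δ + 2 * δ ^ 2) ∧
      sInf (matchingCosts A S) ≤
        sInf (matchingCosts A T) + (A.card : ℝ) * (8 * δ + 2 * δ ^ 2) :=
  optimal_matching_cost_stability_general A S T hA hS hcard δ γ hγ hγδ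
end

section
/- Let E be a real inner product space, ι a finite index set, k ≥ 2 a natural number, and for each i ∈ ι let f_i : E → ℝ be twice differentiable at a point w ∈ E with f_i(w) ≥ 0, ‖∇f_i(w)‖ ≤ 2, and second derivative of operator norm ‖∇²f_i(w)‖ ≤ 2. Then the function F = Σ_{i ∈ ι} f_i^k is twice differentiable at w and its second derivative satisfies ‖∇²F(w)‖ ≤ 2k · Σ_{i ∈ ι} f_i(w)^{k−1} + 4k(k−1) · Σ_{i ∈ ι} f_i(w)^{k−2} in operator norm. -/
set_option maxHeartbeats 4000000 in
set_option synthInstance.maxHeartbeats 400000 in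
/-- Hessian bound for the total-persistence regularizer: if each `f i` is differentiable,
its derivative is differentiable at `w`, `f i w ≥ 0`, `‖∇(f i)(w)‖ ≤ 2` and
`‖∇²(f i)(w)‖ ≤ 2`, then `F = Σᵢ (f i)^k` is twice differentiable at `w` with
`‖∇²F(w)‖ ≤ 2k·Σᵢ f i (w)^{k-1} + 4k·(k-1)·Σᵢ f i (w)^{k-2}` in operator norm. -/
theorem hessian_bound_total_persistence
    {E : Type*} [NormedAddCommGroup E] [InnerProductSpace ℝ E] [CompleteSpace E]
    {ι : Type*} [Fintype ι] (k : ℕ) (hk : 2 ≤ k)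
    (f : ι → E → ℝ) (w : E)
    (hdiff : ∀ i, Differentiable ℝ (f i))
    (hdiff2 : ∀ i, DifferentiableAt ℝ (fderiv ℝ (f i)) w)
    (hnonneg : ∀ i, 0 ≤ f i w)
    (hgrad : ∀ i, ‖gradient (f i) w‖ ≤ 2)
    (hhess : ∀ i, ‖fderiv ℝ (fderiv ℝ (f i)) w‖ ≤ 2) :
    DifferentiableAt ℝ (fderiv ℝ (fun x => ∑ i, f i x ^ k)) w ∧
      ‖fderiv ℝ (fderiv ℝ (fun x => ∑ i, f i x ^ k)) w‖ ≤
        2 * (k : ℝ) * (∑ i, f i w ^ (k - 1)) +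
          4 * (k : ℝ) * ((k : ℝ) - 1) * ∑ i, f i w ^ (k - 2) := by
  -- notation for first and second derivatives of f i
  set D : ι → E →L[ℝ] ℝ := fun i => fderiv ℝ (f i) w with hDdef
  set D2 : ι → E →L[ℝ] E →L[ℝ] ℝ := fun i => fderiv ℝ (fderiv ℝ (f i)) w with hD2def
  -- ‖D i‖ ≤ 2
  have hDnorm : ∀ i, ‖D i‖ ≤ 2 := by
    intro i
    have : ‖gradient (f i) w‖ = ‖D i‖ := by
      rw [gradient]
      exact (InnerProductSpace.toDual ℝ E).symm.norm_map _
    rw [← this]; exact hgrad i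
  -- pointwise derivative of x ↦ f i x ^ n
  have hpow : ∀ (n : ℕ) (i : ι) (x : E),
      HasFDerivAt (fun y => f i y ^ n) (((n : ℝ) * f i x ^ (n - 1)) • fderiv ℝ (f i) x) x := by
    intro n i x
    exact (hasDerivAt_pow n (f i x)).comp_hasFDerivAt x ((hdiff i x).hasFDerivAt)
  -- first derivative of the sum
  have hF1 : fderiv ℝ (fun x => ∑ i, f i x ^ k)
      = fun x => ∑ i, ((k : ℝ) * f i x ^ (k - 1)) • fderiv ℝ (f i) x := by
    funext x
    exact (HasFDerivAt.fun_sum (fun i _ => hpow k i x)).fderiv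
  -- derivative of the scalar coefficient c i x = k * f i x ^ (k-1) at w
  have hc : ∀ i, HasFDerivAt (fun x => (k : ℝ) * f i x ^ (k - 1))
      ((k : ℝ) • (((k - 1 : ℕ) : ℝ) * f i w ^ (k - 1 - 1)) • D i) w := by
    intro i
    exact (hpow (k - 1) i w).const_mul (k : ℝ)
  -- second derivative of each summand at w
  set H : ι → E →L[ℝ] E →L[ℝ] ℝ := fun i =>
    ((k : ℝ) * f i w ^ (k - 1)) • D2 i
      + ((k : ℝ) • (((k - 1 : ℕ) : ℝ) * f i w ^ (k - 1 - 1)) • D i).smulRight (D i) with hHdef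
  have hsmul : ∀ i, HasFDerivAt (fun x => ((k : ℝ) * f i x ^ (k - 1)) • fderiv ℝ (f i) x)
      (H i) w := by
    intro i
    exact (hc i).smul (hdiff2 i).hasFDerivAt
  have hG : HasFDerivAt (fderiv ℝ (fun x => ∑ i, f i x ^ k)) (∑ i, H i) w := by
    rw [hF1]
    exact HasFDerivAt.fun_sum (fun i _ => hsmul i)
  refine ⟨hG.differentiableAt, ?_⟩
  rw [hG.fderiv]
  -- bound each term
  have hk1 : (1 : ℕ) ≤ k := le_trans (by norm_num) hk
  have hterm : ∀ i, ‖H i‖ ≤ 2 * (k : ℝ) * f i w ^ (k - 1)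
      + 4 * (k : ℝ) * ((k : ℝ) - 1) * f i w ^ (k - 2) := by
    intro i
    have hcast : ((k - 1 : ℕ) : ℝ) = (k : ℝ) - 1 := by
      rw [Nat.cast_sub hk1, Nat.cast_one]
    have hidx : k - 1 - 1 = k - 2 := by omega
    have hk1' : (0:ℝ) ≤ (k:ℝ) - 1 := by
      have : (1:ℝ) ≤ (k:ℝ) := by exact_mod_cast hk1
      linarith
    have hnn : (0:ℝ) ≤ (k:ℝ) * (((k:ℝ) - 1) * f i w ^ (k - 2)) :=
      mul_nonneg (Nat.cast_nonneg k) (mul_nonneg hk1' (pow_nonneg (hnonneg i) _))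
    have hnn1 : (0:ℝ) ≤ (k:ℝ) * f i w ^ (k - 1) :=
      mul_nonneg (Nat.cast_nonneg k) (pow_nonneg (hnonneg i) _)
    have h1 : ‖((k : ℝ) * f i w ^ (k - 1)) • D2 i‖ ≤ 2 * (k : ℝ) * f i w ^ (k - 1) := by
      have h1a : ‖((k : ℝ) * f i w ^ (k - 1)) • D2 i‖
          ≤ ‖(k : ℝ) * f i w ^ (k - 1)‖ * ‖D2 i‖ :=
        ContinuousLinearMap.opNorm_smul_le ((k : ℝ) * f i w ^ (k - 1)) (D2 i)
      refine h1a.trans ?_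
      rw [Real.norm_eq_abs, abs_of_nonneg hnn1]
      calc (k : ℝ) * f i w ^ (k - 1) * ‖D2 i‖
          ≤ (k : ℝ) * f i w ^ (k - 1) * 2 :=
            mul_le_mul_of_nonneg_left (hhess i) hnn1
        _ = 2 * (k : ℝ) * f i w ^ (k - 1) := by ring
    have hsc : ‖(k : ℝ) • (((k - 1 : ℕ) : ℝ) * f i w ^ (k - 1 - 1)) • D i‖
        ≤ (k:ℝ) * (((k:ℝ) - 1) * f i w ^ (k - 2)) * 2 := by
      rw [smul_smul]
      have hsca : ‖((k : ℝ) * (((k - 1 : ℕ) : ℝ) * f i w ^ (k - 1 - 1))) • D i‖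
          ≤ ‖(k : ℝ) * (((k - 1 : ℕ) : ℝ) * f i w ^ (k - 1 - 1))‖ * ‖D i‖ :=
        ContinuousLinearMap.opNorm_smul_le _ (D i)
      refine hsca.trans ?_
      rw [Real.norm_eq_abs, hcast, hidx, abs_of_nonneg hnn]
      exact mul_le_mul_of_nonneg_left (hDnorm i) hnn
    have h2 : ‖((k : ℝ) • (((k - 1 : ℕ) : ℝ) * f i w ^ (k - 1 - 1)) • D i).smulRight (D i)‖
        ≤ 4 * (k : ℝ) * ((k : ℝ) - 1) * f i w ^ (k - 2) := by
      calc ‖((k : ℝ) • (((k - 1 : ℕ) : ℝ) * f i w ^ (k - 1 - 1)) • D i).smulRight (D i)‖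
          = ‖(k : ℝ) • (((k - 1 : ℕ) : ℝ) * f i w ^ (k - 1 - 1)) • D i‖ * ‖D i‖ :=
            ContinuousLinearMap.norm_smulRight_apply _ _
        _ ≤ ((k:ℝ) * (((k:ℝ) - 1) * f i w ^ (k - 2)) * 2) * 2 :=
            mul_le_mul hsc (hDnorm i) (norm_nonneg _)
              (by nlinarith [hnn])
        _ = 4 * (k : ℝ) * ((k : ℝ) - 1) * f i w ^ (k - 2) := by ring
    have hH : H i = ((k : ℝ) * f i w ^ (k - 1)) • D2 i
        + ((k : ℝ) • (((k - 1 : ℕ) : ℝ) * f i w ^ (k - 1 - 1)) • D i).smulRight (D i) := rfl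
    have hsum := add_le_add h1 h2
    rw [hH]
    exact le_trans (ContinuousLinearMap.opNorm_add_le _ _) hsum
  calc ‖∑ i, H i‖ ≤ ∑ i, ‖H i‖ := norm_sum_le Finset.univ H
    _ ≤ ∑ i, (2 * (k : ℝ) * f i w ^ (k - 1)
        + 4 * (k : ℝ) * ((k : ℝ) - 1) * f i w ^ (k - 2)) :=
      Finset.sum_le_sum (fun i _ => hterm i)
    _ = 2 * (k : ℝ) * (∑ i, f i w ^ (k - 1))
        + 4 * (k : ℝ) * ((k : ℝ) - 1) * ∑ i, f i w ^ (k - 2) := by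
      rw [Finset.sum_add_distrib, Finset.mul_sum, Finset.mul_sum]
end
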